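/- Let 0 < δ < 1, let η_n > 0 be a sequence with η_n → 0 and n^{1/2} η_n → e for some e with 0 ≤ e < ∞, and for each n let a_{n,S}*, a_{n,H}*, a_{n,A}* be the unique nonnegative solutions of Φ(n^{1/2}(a − η_n)) − Φ(n^{1/2}(−a − η_n)) = δ, Φ(n^{1/2}(a − η_n)) − Φ(−n^{1/2} a) = δ, and Φ(n^{1/2}(a − η_n)) − Φ(−n^{1/2} sqrt(a² + η_n²)) = δ, respectively. Then n^{1/2} a_{n,S}* converges to the unique solution of Φ(a − e) − Φ(−a − e) = δ, n^{1/2} a_{n,H}* converges to the unique solution of Φ(a − e) − Φ(−a) = δ, and n^{1/2} a_{n,A}* converges to the unique solution of Φ(sqrt(a² + e²)) − Φ(−a + e) = δ. -/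

import Mathlib

open MeasureTheory ProbabilityTheory Filter
open scoped NNReal

/-- Standard normal cumulative distribution function Φ. -/
noncomputable def stdNormCDF (x : ℝ) : ℝ :=
  ((gaussianReal 0 1) (Set.Iic x)).toReal

/-- Soft-thresholding (LASSO) estimator with threshold η, as a function of ȳ. -/
noncomputable def softThresh (η y : ℝ) : ℝ := Real.sign y * max (|y| - η) 0

/-- Hard-thresholding estimator with threshold η, as a function of ȳ. -/
noncomputable def hardThresh (η y : ℝ) : ℝ := if η < |y| then y else 0

/-- Adaptive LASSO estimator with tuning parameter η, as a function of ȳ. -/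
noncomputable def adaLasso (η y : ℝ) : ℝ := if |y| ≤ η then 0 else y - η ^ 2 / y

/-- Coverage probability `P_{n,θ}(θ ∈ [est(ȳ) - a, est(ȳ) + b])` in the
known-variance case (σ = 1), where ȳ ~ N(θ, 1/n). -/
noncomputable def cover (n : ℕ) (est : ℝ → ℝ) (a b θ : ℝ) : ℝ :=
  ((gaussianReal θ ((n : ℝ≥0))⁻¹)
    {y : ℝ | est y - a ≤ θ ∧ θ ≤ est y + b}).toReal

/-! After rescaling `b = √n a`, `c = √n η`, each defining equation reads
`Φ(b - c) - Φ(-r(c, b)) = δ` with `r(c, b) = b + c`, `b` and `√(b² + c²)` respectively. This is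
strictly increasing in `b ≥ 0`, nonpositive for `b ≤ 0`, tends to `1` as `b → ∞` and is continuous
in `c`. Hence the limit equation at `c = e` has a unique root `L`; its values at `L ± ε` lie strictly
on either side of `δ`, so they still do for `c = √n η_n` close to `e`, and monotonicity traps the
root `√n a_n` within `ε` of `L`. For the adaptive LASSO the symmetry `Φ(-x) = 1 - Φ(x)` brings the
limit equation into the stated form. -/
open scoped Topology
open Set

lemma stdNormCDF_eq_cdf : stdNormCDF = cdf (gaussianReal 0 1) :=
  funext fun x => (cdf_eq_real _ x).symm

lemma stdNormCDF_sub_stdNormCDF_of_le {x y : ℝ} (h : x ≤ y) :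
    stdNormCDF y - stdNormCDF x = ∫ t in x..y, gaussianPDFReal 0 1 t := by
  have hIoc := (cdf (gaussianReal 0 1)).measure_Ioc x y
  rw [measure_cdf, gaussianReal_apply_eq_integral 0 one_ne_zero,
    ← intervalIntegral.integral_of_le h] at hIoc
  rw [stdNormCDF_eq_cdf]
  refine (ENNReal.ofReal_eq_ofReal_iff ?_ ?_).1 hIoc.symm
  · exact sub_nonneg.2 (monotone_cdf _ h)
  · exact intervalIntegral.integral_nonneg h fun t _ => gaussianPDFReal_nonneg 0 1 t

lemma stdNormCDF_sub_stdNormCDF (x y : ℝ) :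
    stdNormCDF y - stdNormCDF x = ∫ t in x..y, gaussianPDFReal 0 1 t := by
  rcases le_total x y with h | h
  · exact stdNormCDF_sub_stdNormCDF_of_le h
  · rw [intervalIntegral.integral_symm, ← stdNormCDF_sub_stdNormCDF_of_le h, neg_sub]

@[fun_prop]
lemma continuous_stdNormCDF : Continuous stdNormCDF := by
  refine ((integrable_gaussianPDFReal 0 1).continuous_primitive 0).add
    (continuous_const (y := stdNormCDF 0)) |>.congr fun y => ?_
  rw [Pi.add_apply, ← stdNormCDF_sub_stdNormCDF, sub_add_cancel]

lemma strictMono_stdNormCDF : StrictMono stdNormCDF := fun x y hxy => by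
  rw [← sub_pos, stdNormCDF_sub_stdNormCDF]
  exact intervalIntegral.intervalIntegral_pos_of_pos
    (integrable_gaussianPDFReal 0 1).intervalIntegrable
    (fun t => gaussianPDFReal_pos 0 1 t one_ne_zero) hxy

lemma tendsto_stdNormCDF_atTop : Tendsto stdNormCDF atTop (𝓝 1) := by
  rw [stdNormCDF_eq_cdf]; exact tendsto_cdf_atTop (gaussianReal 0 1)

lemma tendsto_stdNormCDF_atBot : Tendsto stdNormCDF atBot (𝓝 0) := by
  rw [stdNormCDF_eq_cdf]; exact tendsto_cdf_atBot (gaussianReal 0 1)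

lemma stdNormCDF_neg (x : ℝ) : stdNormCDF (-x) = 1 - stdNormCDF x := by
  have := nullSingletonClass_gaussianReal (μ := 0) (v := 1) one_ne_zero
  have hsymm : (gaussianReal 0 1).map (fun y => -y) = gaussianReal 0 1 := by
    rw [gaussianReal_map_neg, neg_zero]
  simp only [stdNormCDF, ← measureReal_def]
  rw [← hsymm, map_measureReal_apply measurable_neg measurableSet_Iic, hsymm,
    show (fun y : ℝ => -y) ⁻¹' Iic (-x) = (Iio x)ᶜ by ext; simp,
    probReal_compl_eq_one_sub measurableSet_Iio, measureReal_congr Iio_ae_eq_Iic]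

lemma existsUnique_eq_of_strictMonoOn_Ici {h : ℝ → ℝ} {δ : ℝ} (hcont : Continuous h)
    (hmono : StrictMonoOn h (Ici 0)) (hnonpos : ∀ x ≤ 0, h x ≤ 0) (hδ : 0 < δ)
    (htop : ∀ᶠ x in atTop, δ < h x) : ∃! L, h L = δ := by
  obtain ⟨M, hM, hM0⟩ := (htop.and (eventually_ge_atTop 0)).exists
  obtain ⟨L, -, hL⟩ := intermediate_value_Icc hM0 hcont.continuousOn
    ⟨(hnonpos 0 le_rfl).trans hδ.le, hM.le⟩
  have hpos : ∀ {x}, h x = δ → 0 ≤ x := fun {x} hx => by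
    by_contra! hneg
    linarith [hnonpos x hneg.le]
  exact ⟨L, hL, fun L' hL' => hmono.injOn (hpos hL') (hpos hL) (hL'.trans hL.symm)⟩

lemma tendsto_of_eq_of_strictMonoOn_Ici {α : Type*} {l : Filter α} {g : ℝ → ℝ → ℝ}
    {c b : α → ℝ} {e L δ : ℝ} (hmono : ∀ c, StrictMonoOn (g c) (Ici 0))
    (hcont : ∀ x, ContinuousAt (g · x) e) (hc : Tendsto c l (𝓝 e)) (hL : 0 ≤ L)
    (hgL : g e L = δ) (hb : ∀ᶠ n in l, 0 ≤ b n) (heq : ∀ᶠ n in l, g (c n) (b n) = δ) :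
    Tendsto b l (𝓝 L) := by
  refine tendsto_order.2 ⟨fun x hxL => ?_, fun x hLx => ?_⟩
  · rcases lt_or_ge x 0 with hx | hx
    · exact hb.mono fun n hbn => hx.trans_le hbn
    have hlt : g e x < δ := hgL ▸ hmono e hx hL hxL
    filter_upwards [((hcont x).tendsto.comp hc).eventually_lt_const hlt, hb, heq]
      with n hn hbn heqn
    by_contra! hle
    exact (heqn ▸ hn).not_ge ((hmono (c n)).monotoneOn hbn hx hle)
  · have hx : (0 : ℝ) ≤ x := hL.trans hLx.le
    have hlt : δ < g e x := hgL ▸ hmono e hL hx hLx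
    filter_upwards [((hcont x).tendsto.comp hc).eventually_const_lt hlt, hb, heq]
      with n hn hbn heqn
    by_contra! hle
    exact (heqn ▸ hn).not_ge ((hmono (c n)).monotoneOn hx hbn hle)

/-- Infimal coverage probability of `est(ȳ) ± a` in the scaled units `c = √n η`, `b = √n a`;
the estimator enters only through `r`, e.g. `r c b = b + c` for soft thresholding. -/
noncomputable def minCoverage (r : ℝ → ℝ → ℝ) (c b : ℝ) : ℝ :=
  stdNormCDF (b - c) - stdNormCDF (-r c b)

section minCoverage

variable {r : ℝ → ℝ → ℝ} {c e : ℝ}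

lemma strictMonoOn_minCoverage (hr : MonotoneOn (r c) (Ici 0)) :
    StrictMonoOn (minCoverage r c) (Ici 0) := fun _ hx _ hy hxy =>
  (sub_lt_sub_right (strictMono_stdNormCDF (sub_lt_sub_right hxy c)) _).trans_le
    (sub_le_sub_left (strictMono_stdNormCDF.monotone (neg_le_neg (hr hx hy hxy.le))) _)

lemma continuous_minCoverage_left (hr : Continuous (Function.uncurry r)) (b : ℝ) :
    Continuous (minCoverage r · b) := by
  unfold minCoverage
  have : Continuous (r · b) := hr.comp (continuous_id.prodMk continuous_const)
  fun_prop

lemma continuous_minCoverage_right (hr : Continuous (Function.uncurry r)) :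
    Continuous (minCoverage r c) := by
  unfold minCoverage
  have : Continuous (r c) := hr.comp (continuous_const.prodMk continuous_id)
  fun_prop

lemma minCoverage_nonpos {x : ℝ} (hr : r c x ≤ c - x) : minCoverage r c x ≤ 0 :=
  sub_nonpos.2 (strictMono_stdNormCDF.monotone (by linarith))

lemma tendsto_minCoverage_atTop (hr : Tendsto (r c) atTop atTop) :
    Tendsto (minCoverage r c) atTop (𝓝 1) := by
  have hlo : Tendsto (fun x => stdNormCDF (x - c)) atTop (𝓝 1) :=
    tendsto_stdNormCDF_atTop.comp (tendsto_atTop_add_const_right _ (-c) tendsto_id)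
  have hhi := tendsto_stdNormCDF_atBot.comp (tendsto_neg_atTop_atBot.comp hr)
  rw [← sub_zero 1]
  exact hlo.sub hhi

lemma exists_tendsto_of_minCoverage_eq {α : Type*} {l : Filter α} {δ : ℝ}
    (hr : Continuous (Function.uncurry r)) (hr_mono : ∀ c, MonotoneOn (r c) (Ici 0))
    (hr_le : ∀ x ≤ 0, r e x ≤ e - x) (hr_top : Tendsto (r e) atTop atTop)
    (hδ0 : 0 < δ) (hδ1 : δ < 1) {c b : α → ℝ} (hc : Tendsto c l (𝓝 e))
    (hb : ∀ᶠ n in l, 0 ≤ b n) (heq : ∀ᶠ n in l, minCoverage r (c n) (b n) = δ) :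
    ∃ L, (minCoverage r e L = δ ∧ ∀ L', minCoverage r e L' = δ → L' = L) ∧
      Tendsto b l (𝓝 L) := by
  obtain ⟨L, hL, huniq⟩ := existsUnique_eq_of_strictMonoOn_Ici (continuous_minCoverage_right hr)
    (strictMonoOn_minCoverage (hr_mono e)) (fun x hx => minCoverage_nonpos (hr_le x hx)) hδ0
    ((tendsto_minCoverage_atTop hr_top).eventually_const_lt hδ1)
  have hL0 : 0 ≤ L := by
    by_contra! hneg
    linarith [minCoverage_nonpos (hr_le L hneg.le)]
  exact ⟨L, ⟨hL, huniq⟩, tendsto_of_eq_of_strictMonoOn_Ici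
    (fun c => strictMonoOn_minCoverage (hr_mono c))
    (fun x => (continuous_minCoverage_left hr x).continuousAt) hc hL0 hL hb heq⟩

end minCoverage

lemma minCoverage_sqrt (c b : ℝ) :
    minCoverage (fun c b => √(b ^ 2 + c ^ 2)) c b =
      stdNormCDF √(b ^ 2 + c ^ 2) - stdNormCDF (-b + c) := by
  rw [minCoverage, stdNormCDF_neg, show -b + c = -(b - c) by ring, stdNormCDF_neg]
  ring

lemma mul_sqrt_sq_add_sq {t : ℝ} (ht : 0 ≤ t) (x y : ℝ) :
    t * √(x ^ 2 + y ^ 2) = √((t * x) ^ 2 + (t * y) ^ 2) := by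
  rw [mul_pow, mul_pow, ← mul_add, Real.sqrt_mul (sq_nonneg t), Real.sqrt_sq ht]

theorem stmt_10_general (δ : ℝ) (hδ0 : 0 < δ) (hδ1 : δ < 1) (η : ℕ → ℝ)
    (e : ℝ) (he : 0 ≤ e)
    (hηe : Tendsto (fun n : ℕ => Real.sqrt n * η n) atTop (nhds e))
    (aS aH aA : ℕ → ℝ)
    (haS : ∀ n, 0 ≤ aS n) (haH : ∀ n, 0 ≤ aH n) (haA : ∀ n, 0 ≤ aA n)
    (heqS : ∀ n : ℕ, 1 ≤ n →
      stdNormCDF (Real.sqrt n * (aS n - η n)) -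
        stdNormCDF (Real.sqrt n * (-aS n - η n)) = δ)
    (heqH : ∀ n : ℕ, 1 ≤ n →
      stdNormCDF (Real.sqrt n * (aH n - η n)) - stdNormCDF (-(Real.sqrt n * aH n)) = δ)
    (heqA : ∀ n : ℕ, 1 ≤ n →
      stdNormCDF (Real.sqrt n * (aA n - η n)) -
        stdNormCDF (-(Real.sqrt n * Real.sqrt (aA n ^ 2 + η n ^ 2))) = δ) :
    (∃ L : ℝ, (stdNormCDF (L - e) - stdNormCDF (-L - e) = δ ∧
        ∀ L' : ℝ, stdNormCDF (L' - e) - stdNormCDF (-L' - e) = δ → L' = L) ∧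
      Tendsto (fun n : ℕ => Real.sqrt n * aS n) atTop (nhds L)) ∧
    (∃ L : ℝ, (stdNormCDF (L - e) - stdNormCDF (-L) = δ ∧
        ∀ L' : ℝ, stdNormCDF (L' - e) - stdNormCDF (-L') = δ → L' = L) ∧
      Tendsto (fun n : ℕ => Real.sqrt n * aH n) atTop (nhds L)) ∧
    (∃ L : ℝ, (stdNormCDF (Real.sqrt (L ^ 2 + e ^ 2)) - stdNormCDF (-L + e) = δ ∧
        ∀ L' : ℝ, stdNormCDF (Real.sqrt (L' ^ 2 + e ^ 2)) - stdNormCDF (-L' + e) = δ →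
          L' = L) ∧
      Tendsto (fun n : ℕ => Real.sqrt n * aA n) atTop (nhds L)) := by
  have hb {a : ℕ → ℝ} (ha : ∀ n, 0 ≤ a n) : ∀ᶠ n : ℕ in atTop, 0 ≤ √n * a n :=
    .of_forall fun n => mul_nonneg (Real.sqrt_nonneg _) (ha n)
  have heq {a : ℕ → ℝ} {r : ℝ → ℝ → ℝ}
      (h : ∀ n : ℕ, 1 ≤ n → minCoverage r (√n * η n) (√n * a n) = δ) :
      ∀ᶠ n : ℕ in atTop, minCoverage r (√n * η n) (√n * a n) = δ :=
    eventually_atTop.2 ⟨1, h⟩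
  refine ⟨?_, ?_, ?_⟩
  · obtain ⟨L, hL, hlim⟩ := exists_tendsto_of_minCoverage_eq (r := fun c b => b + c)
      (by fun_prop) (fun c => (monotone_id.add_const c).monotoneOn _)
      (fun x hx => by linarith) (tendsto_atTop_add_const_right _ e tendsto_id) hδ0 hδ1 hηe
      (hb haS) (heq fun n hn => by rw [← heqS n hn, minCoverage]; ring_nf)
    exact ⟨L, by simpa only [minCoverage, neg_add'] using hL, hlim⟩
  · exact exists_tendsto_of_minCoverage_eq (r := fun _ b => b) (by fun_prop)
      (fun _ => monotone_id.monotoneOn _) (fun x hx => by linarith) tendsto_id hδ0 hδ1 hηe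
      (hb haH) (heq fun n hn => by rw [← heqH n hn, minCoverage]; ring_nf)
  · obtain ⟨L, hL, hlim⟩ := exists_tendsto_of_minCoverage_eq
      (r := fun c b => √(b ^ 2 + c ^ 2)) (by fun_prop)
      (fun _ _ hx _ _ hxy => Real.sqrt_le_sqrt (by gcongr))
      (fun x hx => Real.sqrt_le_iff.2 ⟨by linarith, by nlinarith⟩)
      (tendsto_atTop_mono (fun b => (le_abs_self b).trans (Real.abs_le_sqrt
        (le_add_of_nonneg_right (sq_nonneg e)))) tendsto_id) hδ0 hδ1 hηe (hb haA)
      (heq fun n hn => by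
        rw [← heqA n hn, minCoverage, mul_sqrt_sq_add_sq (Real.sqrt_nonneg _)]; ring_nf)
    exact ⟨L, by simpa only [minCoverage_sqrt] using hL, hlim⟩

/-- Asymptotic behavior of the half-lengths of the shortest δ-level intervals in the
conservative-tuning regime `η_n → 0`, `√n η_n → e`, `0 ≤ e < ∞`. -/
theorem stmt_10 (δ : ℝ) (hδ0 : 0 < δ) (hδ1 : δ < 1) (η : ℕ → ℝ) (hη : ∀ n, 0 < η n)
    (e : ℝ) (he : 0 ≤ e) (hη0 : Tendsto η atTop (nhds 0))
    (hηe : Tendsto (fun n : ℕ => Real.sqrt n * η n) atTop (nhds e))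
    (aS aH aA : ℕ → ℝ)
    (haS : ∀ n, 0 ≤ aS n) (haH : ∀ n, 0 ≤ aH n) (haA : ∀ n, 0 ≤ aA n)
    (heqS : ∀ n : ℕ, 1 ≤ n →
      stdNormCDF (Real.sqrt n * (aS n - η n)) -
        stdNormCDF (Real.sqrt n * (-aS n - η n)) = δ)
    (heqH : ∀ n : ℕ, 1 ≤ n →
      stdNormCDF (Real.sqrt n * (aH n - η n)) - stdNormCDF (-(Real.sqrt n * aH n)) = δ)
    (heqA : ∀ n : ℕ, 1 ≤ n →
      stdNormCDF (Real.sqrt n * (aA n - η n)) -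
        stdNormCDF (-(Real.sqrt n * Real.sqrt (aA n ^ 2 + η n ^ 2))) = δ) :
    (∃ L : ℝ, (stdNormCDF (L - e) - stdNormCDF (-L - e) = δ ∧
        ∀ L' : ℝ, stdNormCDF (L' - e) - stdNormCDF (-L' - e) = δ → L' = L) ∧
      Tendsto (fun n : ℕ => Real.sqrt n * aS n) atTop (nhds L)) ∧
    (∃ L : ℝ, (stdNormCDF (L - e) - stdNormCDF (-L) = δ ∧
        ∀ L' : ℝ, stdNormCDF (L' - e) - stdNormCDF (-L') = δ → L' = L) ∧
      Tendsto (fun n : ℕ => Real.sqrt n * aH n) atTop (nhds L)) ∧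
    (∃ L : ℝ, (stdNormCDF (Real.sqrt (L ^ 2 + e ^ 2)) - stdNormCDF (-L + e) = δ ∧
        ∀ L' : ℝ, stdNormCDF (Real.sqrt (L' ^ 2 + e ^ 2)) - stdNormCDF (-L' + e) = δ →
          L' = L) ∧
      Tendsto (fun n : ℕ => Real.sqrt n * aA n) atTop (nhds L)) :=
  stmt_10_general δ hδ0 hδ1 η e he hηe aS aH aA haS haH haA heqS heqH heqA
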